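/- Let f : ℤ × ℤ → ℝ and k, r ≥ 1 integers. Then the discrete trapezoid-type inequality holds: |∑_{t=1}^{k} ∑_{s=1}^{r} f(t,s) - (1/2)[r ∑_{t=1}^{k} (f(t,1) + f(t,r+1)) + k ∑_{s=1}^{r} (f(1,s) + f(k+1,s))] + (1/4) k r [f(1,1) + f(1,r+1) + f(k+1,1) + f(k+1,r+1)]| ≤ (1/4) k r ∑_{t=1}^{k} ∑_{s=1}^{r} |Δ₂Δ₁f(t,s)|, where Δ₂Δ₁f(t,s) = f(t+1,s+1) - f(t+1,s) - f(t,s+1) + f(t,s). -/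

import Mathlib

/-!
Write `E n g = ∑_{t=1}^n g t - n/2 (g 1 + g (n+1))`. Summation by parts gives
`E n g = ∑_{t=1}^n (n/2 - t) (g (t+1) - g t)`, and `|n/2 - t| ≤ n/2` on `[1, n]`, so
`|E n g| ≤ n/2 ∑ |g (t+1) - g t|`. The left-hand side of the theorem is `E k A` with
`A t = E r (f t)`; as `E r` is linear, `A (t+1) - A t = E r (f (t+1) - f t)`, whose forward
differences are the mixed differences `dd f t s`. Applying the one-dimensional bound twice
gives the factor `k r / 4`.
-/

open Finset

/-- Mixed forward difference operator. -/
def dd (h : ℤ → ℤ → ℝ) (s t : ℤ) : ℝ :=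
  h (s + 1) (t + 1) - h (s + 1) t - h s (t + 1) + h s t

noncomputable def trapezoidError (n : ℤ) (g : ℤ → ℝ) : ℝ :=
  ∑ t ∈ Icc 1 n, g t - n / 2 * (g 1 + g (n + 1))

lemma sum_Icc_one_add_one {M : Type*} [AddCommMonoid M] {n : ℤ} (hn : 0 ≤ n) (g : ℤ → M) :
    ∑ t ∈ Icc 1 (n + 1), g t = ∑ t ∈ Icc 1 n, g t + g (n + 1) := by
  rw [← insert_Icc_right_eq_Icc_add_one (by omega), sum_insert (by simp), add_comm]

lemma sum_Icc_one_sub {n : ℤ} (hn : 0 ≤ n) (g : ℤ → ℝ) :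
    ∑ t ∈ Icc 1 n, (g (t + 1) - g t) = g (n + 1) - g 1 := by
  induction n, hn using Int.leInduction with
  | base => simp
  | succ n hn ih => rw [sum_Icc_one_add_one hn, ih]; ring

lemma sum_Icc_one_mul_sub {n : ℤ} (hn : 0 ≤ n) (g : ℤ → ℝ) :
    ∑ t ∈ Icc 1 n, (t : ℝ) * (g (t + 1) - g t) = n * g (n + 1) - ∑ t ∈ Icc 1 n, g t := by
  induction n, hn using Int.leInduction with
  | base => simp
  | succ n hn ih => rw [sum_Icc_one_add_one hn, sum_Icc_one_add_one hn, ih]; push_cast; ring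

lemma trapezoidError_eq_sum {n : ℤ} (hn : 0 ≤ n) (g : ℤ → ℝ) :
    trapezoidError n g = ∑ t ∈ Icc 1 n, ((n : ℝ) / 2 - t) * (g (t + 1) - g t) := by
  simp only [sub_mul, sum_sub_distrib, ← mul_sum, sum_Icc_one_sub hn, sum_Icc_one_mul_sub hn,
    trapezoidError]
  ring

lemma abs_half_sub_le {n t : ℝ} (ht₀ : 0 ≤ t) (htn : t ≤ n) : |n / 2 - t| ≤ n / 2 :=
  abs_le.mpr ⟨by linarith, by linarith⟩

lemma abs_trapezoidError_le {n : ℤ} (hn : 0 ≤ n) (g : ℤ → ℝ) :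
    |trapezoidError n g| ≤ n / 2 * ∑ t ∈ Icc 1 n, |g (t + 1) - g t| := by
  rw [trapezoidError_eq_sum hn, mul_sum]
  refine (abs_sum_le_sum_abs _ _).trans (sum_le_sum fun t ht => ?_)
  obtain ⟨ht₁, htn⟩ := mem_Icc.mp ht
  rw [abs_mul]
  gcongr
  exact abs_half_sub_le (by exact_mod_cast (zero_le_one.trans ht₁)) (by exact_mod_cast htn)

lemma trapezoidError_sub (n : ℤ) (g h : ℤ → ℝ) :
    trapezoidError n (fun t => g t - h t) = trapezoidError n g - trapezoidError n h := by
  simp only [trapezoidError, sum_sub_distrib]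
  ring

lemma trapezoidError_trapezoidError (k r : ℤ) (f : ℤ → ℤ → ℝ) :
    trapezoidError k (fun t => trapezoidError r (f t)) =
      (∑ t ∈ Icc (1 : ℤ) k, ∑ s ∈ Icc (1 : ℤ) r, f t s)
        - (1 / 2) * ((r : ℝ) * (∑ t ∈ Icc (1 : ℤ) k, (f t 1 + f t (r + 1)))
            + (k : ℝ) * (∑ s ∈ Icc (1 : ℤ) r, (f 1 s + f (k + 1) s)))
        + (1 / 4) * (k : ℝ) * (r : ℝ) *
            (f 1 1 + f 1 (r + 1) + f (k + 1) 1 + f (k + 1) (r + 1)) := by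
  simp only [trapezoidError, sum_sub_distrib, sum_add_distrib, ← mul_sum]
  ring

lemma dd_eq_sub_sub (f : ℤ → ℤ → ℝ) (t s : ℤ) :
    dd f t s = (f (t + 1) (s + 1) - f t (s + 1)) - (f (t + 1) s - f t s) := by
  rw [dd]; ring

theorem discrete_trapezoid
    (k r : ℤ) (hk : 1 ≤ k) (hr : 1 ≤ r) (f : ℤ → ℤ → ℝ) :
    |(∑ t ∈ Icc (1 : ℤ) k, ∑ s ∈ Icc (1 : ℤ) r, f t s)
        - (1 / 2) * ((r : ℝ) * (∑ t ∈ Icc (1 : ℤ) k, (f t 1 + f t (r + 1)))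
            + (k : ℝ) * (∑ s ∈ Icc (1 : ℤ) r, (f 1 s + f (k + 1) s)))
        + (1 / 4) * (k : ℝ) * (r : ℝ) *
            (f 1 1 + f 1 (r + 1) + f (k + 1) 1 + f (k + 1) (r + 1))| ≤
      (1 / 4) * (k : ℝ) * (r : ℝ) *
        ∑ t ∈ Icc (1 : ℤ) k, ∑ s ∈ Icc (1 : ℤ) r, |dd f t s| := by
  have hdiff (t : ℤ) : |trapezoidError r (f (t + 1)) - trapezoidError r (f t)| ≤
      r / 2 * ∑ s ∈ Icc 1 r, |dd f t s| := by
    simpa only [trapezoidError_sub, dd_eq_sub_sub] using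
      abs_trapezoidError_le (by omega) (fun s => f (t + 1) s - f t s)
  have hk₀ : (0 : ℝ) ≤ k / 2 := by rify at hk; linarith
  rw [← trapezoidError_trapezoidError]
  calc _ ≤ k / 2 * ∑ t ∈ Icc 1 k, |trapezoidError r (f (t + 1)) - trapezoidError r (f t)| :=
        abs_trapezoidError_le (by omega) (fun t => trapezoidError r (f t))
    _ ≤ k / 2 * ∑ t ∈ Icc 1 k, r / 2 * ∑ s ∈ Icc 1 r, |dd f t s| := by
        gcongr with t; exact hdiff t
    _ = _ := by rw [← mul_sum]; ring
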